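/- arXiv:2103.03929 — 4 statements merged into one kernel-verified Lean document; each statement's English description precedes it below -/
import Mathlib

section
/- For x, y, T > 0 with -y < x < 0, the minimum over τ > T of the function τ ↦ ((τ-T)/(2τT)) · (y + τx/(T-τ))² equals -2xy/T (i.e. with the sign convention q₀(x,y,T) = -min, one has q₀(x,y,T) = 2xy/T), and the minimizer is τ = yT/(x+y). If x ≤ -y the infimum over τ > T equals (x-y)²/(2T), attained in the limit τ → ∞. -/
theorem stmt_2 (x y T : ℝ) (hy : 0 < y) (hT : 0 < T) (hx : x < 0) :
    let g : ℝ → ℝ := fun τ => (τ - T)/(2*τ*T) * (y + τ*x/(T-τ))^2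
    ((-y < x →
      y*T/(x+y) ∈ Set.Ioi T ∧ g (y*T/(x+y)) = -(2*x*y)/T ∧
        ∀ τ ∈ Set.Ioi T, -(2*x*y)/T ≤ g τ)) ∧
    (x ≤ -y →
      IsGLB (g '' Set.Ioi T) ((x-y)^2/(2*T)) ∧
      Filter.Tendsto g Filter.atTop (nhds ((x-y)^2/(2*T)))) := by
  intro g
  have hT0 : T ≠ 0 := ne_of_gt hT
  have hx0 : x ≠ 0 := ne_of_lt hx
  constructor
  · intro hxy
    have hxy0 : 0 < x + y := by linarith
    have hxyne : x + y ≠ 0 := ne_of_gt hxy0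
    have hτT : y*T/(x+y) ∈ Set.Ioi T := by
      simp only [Set.mem_Ioi]
      rw [lt_div_iff₀ hxy0]
      nlinarith
    refine ⟨hτT, ?_, ?_⟩
    · have hlt : T < y*T/(x+y) := hτT
      have hne : T - y*T/(x+y) ≠ 0 := sub_ne_zero.mpr hlt.ne
      have hτ0 : y*T/(x+y) ≠ 0 := ne_of_gt (lt_trans hT hlt)
      have hsub : T - y*T/(x+y) = T*x/(x+y) := by field_simp; ring
      have hinner : y*T/(x+y) * x / (T*x/(x+y)) = y := by
        rw [div_div_eq_mul_div]
        field_simp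
      have hsub2 : y*T/(x+y) - T = -(T*x)/(x+y) := by field_simp; ring
      simp only [g, hsub, hinner, hsub2]
      field_simp
      ring
    · intro τ hτ
      have hlt : T < τ := hτ
      have h1 : (0:ℝ) < τ := lt_trans hT hlt
      have h2 : (0:ℝ) < τ - T := sub_pos.mpr hlt
      have hne : T - τ ≠ 0 := sub_ne_zero.mpr hlt.ne
      have key : g τ - (-(2*x*y)/T) = (y*T - τ*(x+y))^2/(2*τ*T*(τ-T)) := by
        simp only [g]
        field_simp
        ring
      have hpos : 0 ≤ (y*T - τ*(x+y))^2/(2*τ*T*(τ-T)) := by positivity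
      linarith
  · intro hxy
    have hL : Filter.Tendsto g Filter.atTop (nhds ((x-y)^2/(2*T))) := by
      have ht : Filter.Tendsto (fun τ : ℝ => T/τ) Filter.atTop (nhds 0) :=
        Filter.Tendsto.div_atTop tendsto_const_nhds Filter.tendsto_id
      have ht2 : Filter.Tendsto (fun τ : ℝ => y*T/τ) Filter.atTop (nhds 0) :=
        Filter.Tendsto.div_atTop tendsto_const_nhds Filter.tendsto_id
      have hnum : Filter.Tendsto (fun τ : ℝ => (y*T/τ - (y-x))^2) Filter.atTop
          (nhds ((x-y)^2)) := by
        have h3 : Filter.Tendsto (fun τ : ℝ => y*T/τ - (y-x)) Filter.atTop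
            (nhds (0 - (y-x))) := ht2.sub tendsto_const_nhds
        have h4 : Filter.Tendsto (fun τ : ℝ => (y*T/τ - (y-x))^2) Filter.atTop
            (nhds ((0 - (y-x))^2)) := h3.pow 2
        convert h4 using 2
        ring
      have hden : Filter.Tendsto (fun τ : ℝ => 2*T*(1 - T/τ)) Filter.atTop (nhds (2*T)) := by
        have := (tendsto_const_nhds (x := (2*T:ℝ)) (f := Filter.atTop)).mul
          ((tendsto_const_nhds (x := (1:ℝ))).sub ht)
        simpa using this
      have h2T : (2*T : ℝ) ≠ 0 := by positivity
      have hh : Filter.Tendsto (fun τ : ℝ => (y*T/τ - (y-x))^2 / (2*T*(1 - T/τ)))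
          Filter.atTop (nhds ((x-y)^2/(2*T))) := hnum.div hden h2T
      refine hh.congr' ?_
      filter_upwards [Filter.Ioi_mem_atTop T] with τ hτ
      have hlt : T < τ := hτ
      have h1 : (0:ℝ) < τ := lt_trans hT hlt
      have hne : T - τ ≠ 0 := sub_ne_zero.mpr hlt.ne
      have hne' : τ - T ≠ 0 := sub_ne_zero.mpr hlt.ne'
      simp only [g]
      field_simp
      ring
    constructor
    · constructor
      · rintro z ⟨τ, hτ, rfl⟩
        have hlt : T < τ := hτ
        have h1 : (0:ℝ) < τ := lt_trans hT hlt
        have h2 : (0:ℝ) < τ - T := sub_pos.mpr hlt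
        have hne : T - τ ≠ 0 := sub_ne_zero.mpr hlt.ne
        have key : g τ - (x-y)^2/(2*T)
            = (y^2*T^2 + τ*T*(y-x)*(-(x+y)))/(2*τ*T*(τ-T)) := by
          simp only [g]
          field_simp
          ring
        have hnn : 0 ≤ τ*T*(y-x)*(-(x+y)) := by
          apply mul_nonneg
          apply mul_nonneg
          · positivity
          · linarith
          · linarith
        have hnum : 0 ≤ y^2*T^2 + τ*T*(y-x)*(-(x+y)) := by nlinarith [sq_nonneg (y*T)]
        have hpos : 0 ≤ (y^2*T^2 + τ*T*(y-x)*(-(x+y)))/(2*τ*T*(τ-T)) :=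
          div_nonneg hnum (by positivity)
        linarith
      · intro b hb
        refine ge_of_tendsto hL ?_
        filter_upwards [Filter.Ioi_mem_atTop T] with τ hτ
        exact hb ⟨τ, hτ, rfl⟩
    · exact hL
end

section
/- Let A : [0,∞) → ℝ be continuous and define g_{2,A}(s,T) = (m_{1,A}(s,T)m_{2,A}(s,T)σ_A²(s) - m_{2,A}(s)σ_A²(s,T))/(m_{1,A}(s)σ_A²(s,T)). Then g_{2,A}(s,T) = (σ_A²(T)/m_{1,A}(T)) · (m_{2,A}(s,T)/σ_A²(s,T)) - m_{2,A}(T)/m_{1,A}(T), and ∂g_{2,A}(s,T)/∂s = (σ_A²(T)/(m_{1,A}(s)σ_A⁴(s,T))) · (m_{1,A}(s,T)m_{2,A}(s,T) - σ_A²(s,T)). In particular, if A is non-negative, then s ↦ g_{2,A}(s,T) is non-decreasing on (0,T). -/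
noncomputable def m1 (A : ℝ → ℝ) (s T : ℝ) : ℝ := Real.exp (∫ u in s..T, A u)

noncomputable def m2 (A : ℝ → ℝ) (s T : ℝ) : ℝ :=
  ∫ u in s..T, Real.exp (∫ v in u..T, A v)

noncomputable def sig2 (A : ℝ → ℝ) (s T : ℝ) : ℝ :=
  ∫ u in s..T, Real.exp (2 * ∫ v in u..T, A v)

noncomputable def g2 (A : ℝ → ℝ) (s T : ℝ) : ℝ :=
  (m1 A s T * m2 A s T * sig2 A 0 s - m2 A 0 s * sig2 A s T) /
    (m1 A 0 s * sig2 A s T)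

/-!
Both `m2` and `sig2` are integrals `∫_s^T exp (c ∫_u^T A) du` (with `c = 1, 2`), so
splitting `[0, T]` at `s` gives `m2(T) = m2(s,T) + m1(s,T) m2(s)` and
`σ²(T) = σ²(s,T) + m1(s,T)² σ²(s)`.
Eliminating `m2(s)` and `σ²(s)` from `g2` yields the closed form, whose only `s`-dependence is
through `m2(s,T) / σ²(s,T)`; the fundamental theorem of calculus differentiates that quotient.
For `A ≥ 0`, `exp (2 ∫_u^T A) ≤ exp (∫_s^T A) exp (∫_u^T A)` for `u ≥ s`, so
`σ²(s,T) ≤ m1(s,T) m2(s,T)` and the derivative is non-negative.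
-/

open intervalIntegral

noncomputable def expIntegral (A : ℝ → ℝ) (c s T : ℝ) : ℝ :=
  ∫ u in s..T, Real.exp (c * ∫ v in u..T, A v)

section

variable {A : ℝ → ℝ}

lemma m2_eq_expIntegral (s T : ℝ) : m2 A s T = expIntegral A 1 s T := by
  simp only [m2, expIntegral, one_mul]

lemma sig2_eq_expIntegral (s T : ℝ) : sig2 A s T = expIntegral A 2 s T := rfl

lemma m1_pos (s T : ℝ) : 0 < m1 A s T := Real.exp_pos _

lemma m1_sq (s T : ℝ) : m1 A s T ^ 2 = Real.exp (2 * ∫ v in s..T, A v) := by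
  rw [m1, ← Real.exp_nat_mul, Nat.cast_ofNat]

variable (hA : Continuous A)
include hA

lemma continuous_integral_left (T : ℝ) : Continuous fun s => ∫ v in s..T, A v := by
  have hswap : (fun s => ∫ v in s..T, A v) = fun s => -∫ v in T..s, A v :=
    funext fun s => integral_symm _ _
  rw [hswap]
  exact (continuous_primitive (fun a b => hA.intervalIntegrable a b) T).neg

lemma continuous_exp_mul_integral_left (c T : ℝ) :
    Continuous fun u => Real.exp (c * ∫ v in u..T, A v) :=
  Real.continuous_exp.comp (continuous_const.mul (continuous_integral_left hA T))

lemma integral_add_integral_left (u s T : ℝ) :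
    (∫ v in u..s, A v) + ∫ v in s..T, A v = ∫ v in u..T, A v :=
  integral_add_adjacent_intervals (hA.intervalIntegrable _ _) (hA.intervalIntegrable _ _)

lemma m1_mul_m1 (a s T : ℝ) : m1 A a s * m1 A s T = m1 A a T := by
  rw [m1, m1, m1, ← Real.exp_add, integral_add_integral_left hA]

lemma expIntegral_split (c a s T : ℝ) :
    expIntegral A c a T =
      expIntegral A c s T + Real.exp (c * ∫ v in s..T, A v) * expIntegral A c a s := by
  have hint : ∀ a b, IntervalIntegrable (fun u => Real.exp (c * ∫ v in u..T, A v))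
      MeasureTheory.volume a b :=
    (continuous_exp_mul_integral_left hA c T).intervalIntegrable
  have head : (∫ u in a..s, Real.exp (c * ∫ v in u..T, A v)) =
      Real.exp (c * ∫ v in s..T, A v) * expIntegral A c a s := by
    rw [expIntegral, ← integral_const_mul]
    refine integral_congr fun u _ => ?_
    rw [← Real.exp_add, ← mul_add, add_comm, integral_add_integral_left hA]
  rw [expIntegral, ← integral_add_adjacent_intervals (hint a s) (hint s T), head, add_comm]
  rfl

lemma m2_split (a s T : ℝ) : m2 A a T = m2 A s T + m1 A s T * m2 A a s := by
  simpa only [← m2_eq_expIntegral, one_mul, ← m1.eq_1] using expIntegral_split hA 1 a s T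

lemma sig2_split (a s T : ℝ) : sig2 A a T = sig2 A s T + m1 A s T ^ 2 * sig2 A a s := by
  simpa only [← sig2_eq_expIntegral, m1_sq] using expIntegral_split hA 2 a s T

lemma hasDerivAt_expIntegral_left (c T s : ℝ) :
    HasDerivAt (fun s' => expIntegral A c s' T) (-Real.exp (c * ∫ v in s..T, A v)) s := by
  have hg := continuous_exp_mul_integral_left hA c T
  exact integral_hasDerivAt_left (hg.intervalIntegrable _ _) (hg.stronglyMeasurableAtFilter _ _)
    hg.continuousAt

lemma hasDerivAt_m2_left (T s : ℝ) : HasDerivAt (fun s' => m2 A s' T) (-m1 A s T) s := by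
  simpa only [m2_eq_expIntegral, one_mul, ← m1.eq_1] using hasDerivAt_expIntegral_left hA 1 T s

lemma hasDerivAt_sig2_left (T s : ℝ) :
    HasDerivAt (fun s' => sig2 A s' T) (-(m1 A s T ^ 2)) s := by
  simpa only [sig2_eq_expIntegral, m1_sq] using hasDerivAt_expIntegral_left hA 2 T s

lemma sig2_pos {s T : ℝ} (h : s < T) : 0 < sig2 A s T :=
  intervalIntegral_pos_of_pos_on
    ((continuous_exp_mul_integral_left hA 2 T).intervalIntegrable _ _)
    (fun _ _ => Real.exp_pos _) h

lemma sig2_le_m1_mul_m2 (hA_nonneg : ∀ t, 0 ≤ A t) {s T : ℝ} (h : s ≤ T) :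
    sig2 A s T ≤ m1 A s T * m2 A s T := by
  rw [m2_eq_expIntegral, expIntegral, m1, ← integral_const_mul]
  refine integral_mono_on h ((continuous_exp_mul_integral_left hA 2 T).intervalIntegrable _ _)
    ((continuous_const.mul (continuous_exp_mul_integral_left hA 1 T)).intervalIntegrable _ _)
    fun u hu => ?_
  rw [one_mul, ← Real.exp_add, Real.exp_le_exp, ← integral_add_integral_left hA s u T]
  have hsu : 0 ≤ ∫ v in s..u, A v := integral_nonneg hu.1 fun x _ => hA_nonneg x
  linarith

lemma g2_eq_of_lt {s T : ℝ} (h : s < T) :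
    g2 A s T = sig2 A 0 T / m1 A 0 T * (m2 A s T / sig2 A s T) - m2 A 0 T / m1 A 0 T := by
  have hσ := (sig2_pos hA h).ne'
  have hm1 : ∀ a b, m1 A a b ≠ 0 := fun a b => (m1_pos a b).ne'
  rw [g2, m2_split hA 0 s T, sig2_split hA 0 s T, ← m1_mul_m1 hA 0 s T]
  field_simp [hm1]
  ring

lemma hasDerivAt_g2 {s T : ℝ} (h : s < T) :
    HasDerivAt (fun s' => g2 A s' T)
      (sig2 A 0 T / (m1 A 0 s * sig2 A s T ^ 2) * (m1 A s T * m2 A s T - sig2 A s T)) s := by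
  have hσ := (sig2_pos hA h).ne'
  have hm1 : ∀ a b, m1 A a b ≠ 0 := fun a b => (m1_pos a b).ne'
  have hquot := ((hasDerivAt_m2_left hA T s).div (hasDerivAt_sig2_left hA T s) hσ).const_mul
    (sig2 A 0 T / m1 A 0 T) |>.sub_const (m2 A 0 T / m1 A 0 T)
  have hclosed : (fun s' => g2 A s' T) =ᶠ[nhds s]
      fun s' => sig2 A 0 T / m1 A 0 T * (m2 A s' T / sig2 A s' T) - m2 A 0 T / m1 A 0 T :=
    Filter.eventually_of_mem (Iio_mem_nhds h) fun x hx => g2_eq_of_lt hA hx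
  refine (hquot.congr_of_eventuallyEq hclosed).congr_deriv ?_
  rw [← m1_mul_m1 hA 0 s T]
  field_simp [hm1]
  ring

end

theorem stmt_7_general (A : ℝ → ℝ) (hA : Continuous A) (T : ℝ) :
    (∀ s ∈ Set.Ioo (0:ℝ) T,
      g2 A s T = (sig2 A 0 T / m1 A 0 T) * (m2 A s T / sig2 A s T)
          - m2 A 0 T / m1 A 0 T ∧
      HasDerivAt (fun s' => g2 A s' T)
        (sig2 A 0 T / (m1 A 0 s * (sig2 A s T)^2)
          * (m1 A s T * m2 A s T - sig2 A s T)) s) ∧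
    ((∀ t, 0 ≤ A t) → MonotoneOn (fun s => g2 A s T) (Set.Ioo 0 T)) := by
  refine ⟨fun s hs => ⟨g2_eq_of_lt hA hs.2, hasDerivAt_g2 hA hs.2⟩, fun hA_nonneg => ?_⟩
  refine monotoneOn_of_deriv_nonneg (convex_Ioo 0 T)
    (fun x hx => (hasDerivAt_g2 hA hx.2).continuousAt.continuousWithinAt) ?_ ?_ <;>
    rw [interior_Ioo]
  · exact fun x hx => (hasDerivAt_g2 hA hx.2).differentiableAt.differentiableWithinAt
  · intro x hx
    have hm1 := m1_pos (A := A) 0 x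
    rw [(hasDerivAt_g2 hA hx.2).deriv]
    exact mul_nonneg (div_nonneg (sig2_pos hA (hx.1.trans hx.2)).le (by positivity))
      (sub_nonneg.2 (sig2_le_m1_mul_m2 hA hA_nonneg hx.2.le))

theorem stmt_7 (A : ℝ → ℝ) (hA : Continuous A) (T : ℝ) (hT : 0 < T) :
    (∀ s ∈ Set.Ioo (0:ℝ) T,
      g2 A s T = (sig2 A 0 T / m1 A 0 T) * (m2 A s T / sig2 A s T)
          - m2 A 0 T / m1 A 0 T ∧
      HasDerivAt (fun s' => g2 A s' T)
        (sig2 A 0 T / (m1 A 0 s * (sig2 A s T)^2)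
          * (m1 A s T * m2 A s T - sig2 A s T)) s) ∧
    ((∀ t, 0 ≤ A t) → MonotoneOn (fun s => g2 A s T) (Set.Ioo 0 T)) :=
  stmt_7_general A hA T
end

section
/- Let A : [0,∞) → ℝ be continuous and define g_{2,A}(T,T) = (σ_A²(T) - m_{2,A}(T))/m_{1,A}(T), where m_{1,A}(T) = exp(∫_0^T A), m_{2,A}(T) = ∫_0^T exp(∫_s^T A)ds, σ_A²(T) = ∫_0^T exp(2∫_s^T A)ds. Then T ↦ g_{2,A}(T,T) is differentiable with d/dT g_{2,A}(T,T) = A(T)σ_A²(T)/m_{1,A}(T). In particular, if A ≥ 0 then g_{2,A}(T,T) is non-negative and non-decreasing in T. -/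
/-- `g_{2,A}(T,T) = (σ_A²(T) - m_{2,A}(T))/m_{1,A}(T)`. -/
noncomputable def g2TT (A : ℝ → ℝ) (T : ℝ) : ℝ :=
  (sig2 A 0 T - m2 A 0 T) / m1 A 0 T

/-!
With `P(t) = ∫₀ᵗ A`, the weights factor as `exp (c ∫ᵤᵀ A) = exp (c P(T)) exp (-c P(u))`, so
`g(T) = e^{P(T)} ∫₀ᵀ e^{-2P} - ∫₀ᵀ e^{-P}`. Differentiating, the terms `e^{P(T)} e^{-2P(T)}` and
`e^{-P(T)}` cancel and only `A(T) e^{P(T)} ∫₀ᵀ e^{-2P} = A(T) σ²(T) / m₁(T)` survives. For `A ≥ 0`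
this derivative is nonnegative on `[0, ∞)`, and `g(0) = 0`.
-/

open Real

noncomputable def primitive (A : ℝ → ℝ) (t : ℝ) : ℝ := ∫ u in (0 : ℝ)..t, A u

section
variable {A : ℝ → ℝ}

theorem hasDerivAt_primitive (hA : Continuous A) (t : ℝ) :
    HasDerivAt (primitive A) (A t) t :=
  (hA.integral_hasStrictDerivAt 0 t).hasDerivAt

@[fun_prop]
theorem continuous_primitive (hA : Continuous A) : Continuous (primitive A) :=
  continuous_iff_continuousAt.2 fun t => (hasDerivAt_primitive hA t).continuousAt

theorem integral_eq_primitive_sub (hA : Continuous A) (u T : ℝ) :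
    ∫ v in u..T, A v = primitive A T - primitive A u :=
  (intervalIntegral.integral_interval_sub_left (hA.intervalIntegrable 0 T)
    (hA.intervalIntegrable 0 u)).symm

theorem integral_exp_mul_integral (hA : Continuous A) (c s T : ℝ) :
    ∫ u in s..T, exp (c * ∫ v in u..T, A v) =
      exp (c * primitive A T) * ∫ u in s..T, exp (-(c * primitive A u)) := by
  rw [← intervalIntegral.integral_const_mul]
  refine intervalIntegral.integral_congr fun u _ => ?_
  simp only [integral_eq_primitive_sub hA, ← exp_add]
  ring_nf

theorem m1_zero_eq (A : ℝ → ℝ) (T : ℝ) : m1 A 0 T = exp (primitive A T) := rfl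

theorem sig2_div_m1_eq (hA : Continuous A) (T : ℝ) :
    sig2 A 0 T / m1 A 0 T = exp (primitive A T) * ∫ u in (0 : ℝ)..T, exp (-(2 * primitive A u)) := by
  rw [sig2, integral_exp_mul_integral hA, m1_zero_eq, two_mul, exp_add]
  field_simp

theorem g2TT_eq (hA : Continuous A) (T : ℝ) :
    g2TT A T = exp (primitive A T) * (∫ u in (0 : ℝ)..T, exp (-(2 * primitive A u))) -
      ∫ u in (0 : ℝ)..T, exp (-primitive A u) := by
  have hm2 : m2 A 0 T = exp (primitive A T) * ∫ u in (0 : ℝ)..T, exp (-primitive A u) := by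
    simpa [m2] using integral_exp_mul_integral hA 1 0 T
  rw [g2TT, sub_div, sig2_div_m1_eq hA, hm2, m1_zero_eq]
  field_simp

theorem hasDerivAt_g2TT (hA : Continuous A) (T : ℝ) :
    HasDerivAt (g2TT A) (A T * sig2 A 0 T / m1 A 0 T) T := by
  have hG : HasDerivAt (fun t => ∫ u in (0 : ℝ)..t, exp (-(2 * primitive A u)))
      (exp (-(2 * primitive A T))) T :=
    ((by fun_prop : Continuous fun u => exp (-(2 * primitive A u))).integral_hasStrictDerivAt
      0 T).hasDerivAt
  have hH : HasDerivAt (fun t => ∫ u in (0 : ℝ)..t, exp (-primitive A u))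
      (exp (-primitive A T)) T :=
    ((by fun_prop : Continuous fun u => exp (-primitive A u)).integral_hasStrictDerivAt
      0 T).hasDerivAt
  have hcancel : exp (primitive A T) * exp (-(2 * primitive A T)) = exp (-primitive A T) := by
    rw [← exp_add]
    ring_nf
  rw [funext (g2TT_eq hA), mul_div_assoc, sig2_div_m1_eq hA]
  exact (((hasDerivAt_primitive hA T).exp.mul hG).sub hH).congr_deriv
    (by linear_combination hcancel)

theorem g2TT_zero (A : ℝ → ℝ) : g2TT A 0 = 0 := by
  simp [g2TT, sig2, m2]

theorem monotoneOn_g2TT (hA : Continuous A) (hA₀ : ∀ t, 0 ≤ A t) :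
    MonotoneOn (g2TT A) (Set.Ici 0) := by
  refine monotoneOn_of_hasDerivWithinAt_nonneg (convex_Ici 0)
    (fun t _ => (hasDerivAt_g2TT hA t).continuousAt.continuousWithinAt)
    (fun t _ => (hasDerivAt_g2TT hA t).hasDerivWithinAt) fun t ht => ?_
  rw [interior_Ici] at ht
  have hsig2 : 0 ≤ sig2 A 0 t := intervalIntegral.integral_nonneg ht.le fun u _ => (exp_pos _).le
  exact div_nonneg (mul_nonneg (hA₀ t) hsig2) (exp_pos _).le

end

theorem stmt_8 (A : ℝ → ℝ) (hA : Continuous A) :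
    (∀ T > (0:ℝ), HasDerivAt (g2TT A) (A T * sig2 A 0 T / m1 A 0 T) T) ∧
    ((∀ t, 0 ≤ A t) →
      (∀ T > (0:ℝ), 0 ≤ g2TT A T) ∧ MonotoneOn (g2TT A) (Set.Ioi 0)) := by
  refine ⟨fun T _ => hasDerivAt_g2TT hA T, fun hA₀ => ⟨fun T hT => ?_,
    (monotoneOn_g2TT hA hA₀).mono Set.Ioi_subset_Ici_self⟩⟩
  simpa [g2TT_zero] using monotoneOn_g2TT hA hA₀ Set.self_mem_Ici hT.le hT.le
end

section
/- Let A : [0,∞) → ℝ be continuous with A ≥ 0 on [0,T]. Define the ratio r(s) = g_{2,A}(s,T)/g_{1,A}(s,T) for 0 < s < T. Then r(s) = m_{2,A}(T) - σ_A²(T)m_{2,A}(s)/(m_{1,A}(s,T)σ_A²(s)), lim_{s→T} r(s) = 0, and d/ds r(s) = -(σ_A²(T)/m_{1,A}(s,T)) · (σ_A²(s) - m_{2,A}(s))/σ_A⁴(s) ≤ 0, so r is non-increasing on (0,T). -/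
noncomputable def g1 (A : ℝ → ℝ) (s T : ℝ) : ℝ :=
  m1 A s T * sig2 A 0 s / (m1 A 0 s * sig2 A s T)

/-! ### Auxiliary definitions and lemmas -/

noncomputable def Ef (A : ℝ → ℝ) (s : ℝ) : ℝ := Real.exp (∫ u in (0:ℝ)..s, A u)

noncomputable def pJ1 (A : ℝ → ℝ) (s : ℝ) : ℝ := ∫ u in (0:ℝ)..s, (Ef A u)⁻¹

noncomputable def pJ2 (A : ℝ → ℝ) (s : ℝ) : ℝ := ∫ u in (0:ℝ)..s, ((Ef A u)^2)⁻¹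

lemma Ef_pos (A : ℝ → ℝ) (s : ℝ) : 0 < Ef A s := Real.exp_pos _

lemma Ef_cont {A : ℝ → ℝ} (hA : Continuous A) : Continuous (Ef A) := by
  have h : ∀ x : ℝ, HasDerivAt (fun b => ∫ u in (0:ℝ)..b, A u) (A x) x := fun x =>
    intervalIntegral.integral_hasDerivAt_right (hA.intervalIntegrable _ _)
      (hA.stronglyMeasurableAtFilter _ _) hA.continuousAt
  exact Real.continuous_exp.comp <| continuous_iff_continuousAt.2 fun x =>
    (h x).differentiableAt.continuousAt

lemma exp_int_eq {A : ℝ → ℝ} (hA : Continuous A) (u t : ℝ) :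
    Real.exp (∫ v in u..t, A v) = Ef A t / Ef A u := by
  rw [Ef, Ef, ← Real.exp_sub]
  congr 1
  rw [eq_sub_iff_add_eq, add_comm]
  exact intervalIntegral.integral_add_adjacent_intervals (hA.intervalIntegrable _ _)
    (hA.intervalIntegrable _ _)

lemma Ef_inv_cont {A : ℝ → ℝ} (hA : Continuous A) : Continuous fun u => (Ef A u)⁻¹ :=
  (Ef_cont hA).inv₀ fun u => (Ef_pos A u).ne'

lemma Ef_inv2_cont {A : ℝ → ℝ} (hA : Continuous A) : Continuous fun u => ((Ef A u)^2)⁻¹ :=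
  ((Ef_cont hA).pow 2).inv₀ fun u => (pow_pos (Ef_pos A u) 2).ne'

lemma m1_repr {A : ℝ → ℝ} (hA : Continuous A) (s t : ℝ) :
    m1 A s t = Ef A t / Ef A s := exp_int_eq hA s t

lemma m2_repr {A : ℝ → ℝ} (hA : Continuous A) (s t : ℝ) :
    m2 A s t = Ef A t * (pJ1 A t - pJ1 A s) := by
  have : m2 A s t = ∫ u in s..t, Ef A t * (Ef A u)⁻¹ := by
    unfold m2
    congr 1; funext u; rw [exp_int_eq hA, div_eq_mul_inv]
  rw [this, intervalIntegral.integral_const_mul, pJ1, pJ1,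
    intervalIntegral.integral_interval_sub_left ((Ef_inv_cont hA).intervalIntegrable _ _)
      ((Ef_inv_cont hA).intervalIntegrable _ _)]

lemma sig2_repr {A : ℝ → ℝ} (hA : Continuous A) (s t : ℝ) :
    sig2 A s t = (Ef A t)^2 * (pJ2 A t - pJ2 A s) := by
  have : sig2 A s t = ∫ u in s..t, (Ef A t)^2 * ((Ef A u)^2)⁻¹ := by
    unfold sig2
    congr 1; funext u
    rw [two_mul, Real.exp_add, exp_int_eq hA, div_eq_mul_inv]
    field_simp
  rw [this, intervalIntegral.integral_const_mul, pJ2, pJ2,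
    intervalIntegral.integral_interval_sub_left ((Ef_inv2_cont hA).intervalIntegrable _ _)
      ((Ef_inv2_cont hA).intervalIntegrable _ _)]

lemma pJ1_deriv {A : ℝ → ℝ} (hA : Continuous A) (s : ℝ) :
    HasDerivAt (pJ1 A) ((Ef A s)⁻¹) s :=
  intervalIntegral.integral_hasDerivAt_right ((Ef_inv_cont hA).intervalIntegrable _ _)
    ((Ef_inv_cont hA).stronglyMeasurableAtFilter _ _) (Ef_inv_cont hA).continuousAt

lemma pJ2_deriv {A : ℝ → ℝ} (hA : Continuous A) (s : ℝ) :
    HasDerivAt (pJ2 A) (((Ef A s)^2)⁻¹) s :=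
  intervalIntegral.integral_hasDerivAt_right ((Ef_inv2_cont hA).intervalIntegrable _ _)
    ((Ef_inv2_cont hA).stronglyMeasurableAtFilter _ _) (Ef_inv2_cont hA).continuousAt

lemma pJ2_mono {A : ℝ → ℝ} (hA : Continuous A) {a b : ℝ} (hab : a < b) :
    0 < pJ2 A b - pJ2 A a := by
  rw [pJ2, pJ2, intervalIntegral.integral_interval_sub_left
    ((Ef_inv2_cont hA).intervalIntegrable _ _) ((Ef_inv2_cont hA).intervalIntegrable _ _)]
  exact intervalIntegral.intervalIntegral_pos_of_pos
    ((Ef_inv2_cont hA).intervalIntegrable _ _)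
    (fun u => inv_pos.2 (pow_pos (Ef_pos A u) 2)) hab

lemma pJ1_zero (A : ℝ → ℝ) : pJ1 A 0 = 0 := intervalIntegral.integral_same

lemma Ef_zero (A : ℝ → ℝ) : Ef A 0 = 1 := by
  rw [Ef, intervalIntegral.integral_same, Real.exp_zero]

lemma pJ2_zero (A : ℝ → ℝ) : pJ2 A 0 = 0 := intervalIntegral.integral_same

theorem stmt_9 (A : ℝ → ℝ) (hA : Continuous A) (T : ℝ) (hT : 0 < T)
    (hA0 : ∀ t ∈ Set.Icc (0:ℝ) T, 0 ≤ A t) :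
    let r : ℝ → ℝ := fun s => g2 A s T / g1 A s T
    (∀ s ∈ Set.Ioo (0:ℝ) T,
      r s = m2 A 0 T - sig2 A 0 T * m2 A 0 s / (m1 A s T * sig2 A 0 s)) ∧
    Filter.Tendsto r (nhdsWithin T (Set.Iio T)) (nhds 0) ∧
    (∀ s ∈ Set.Ioo (0:ℝ) T,
      HasDerivAt r
        (-(sig2 A 0 T / m1 A s T) * ((sig2 A 0 s - m2 A 0 s) / (sig2 A 0 s)^2)) s ∧
      -(sig2 A 0 T / m1 A s T) * ((sig2 A 0 s - m2 A 0 s) / (sig2 A 0 s)^2) ≤ 0) ∧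
    AntitoneOn r (Set.Ioo 0 T) := by
  intro r
  have hEne : ∀ x, Ef A x ≠ 0 := fun x => (Ef_pos A x).ne'
  have heT : Ef A T ≠ 0 := hEne T
  have hbpos : ∀ s ∈ Set.Ioo (0:ℝ) T, 0 < pJ2 A s := fun s hs => by
    have := pJ2_mono hA hs.1
    rwa [pJ2_zero, sub_zero] at this
  have hbT : (0:ℝ) < pJ2 A T := by
    have := pJ2_mono hA hT
    rwa [pJ2_zero, sub_zero] at this
  -- master formula
  have key : ∀ s ∈ Set.Ioo (0:ℝ) T,
      r s = m2 A 0 T - (Ef A T * pJ2 A T) * (pJ1 A s / pJ2 A s) := by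
    intro s hs
    have h1 : pJ2 A s ≠ 0 := (hbpos s hs).ne'
    have h2 : pJ2 A T - pJ2 A s ≠ 0 := (pJ2_mono hA hs.2).ne'
    have hes : Ef A s ≠ 0 := hEne s
    show g2 A s T / g1 A s T = _
    simp only [g1, g2, m1_repr hA, m2_repr hA, sig2_repr hA, pJ1_zero, pJ2_zero, sub_zero,
      Ef_zero, div_one]
    field_simp
    ring
  -- the limit formula target
  have hphi_cont : ContinuousAt
      (fun s => m2 A 0 T - (Ef A T * pJ2 A T) * (pJ1 A s / pJ2 A s)) T := by
    have hJ1c : ContinuousAt (pJ1 A) T := (pJ1_deriv hA T).differentiableAt.continuousAt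
    have hJ2c : ContinuousAt (pJ2 A) T := (pJ2_deriv hA T).differentiableAt.continuousAt
    exact (continuousAt_const.sub
      (continuousAt_const.mul (hJ1c.div hJ2c hbT.ne')))
  have hder : ∀ s ∈ Set.Ioo (0:ℝ) T,
      HasDerivAt r
        (-(sig2 A 0 T / m1 A s T) * ((sig2 A 0 s - m2 A 0 s) / (sig2 A 0 s)^2)) s ∧
      -(sig2 A 0 T / m1 A s T) * ((sig2 A 0 s - m2 A 0 s) / (sig2 A 0 s)^2) ≤ 0 := by
    intro s hs
    have h1 : pJ2 A s ≠ 0 := (hbpos s hs).ne'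
    have hd : HasDerivAt r
        (-((Ef A T * pJ2 A T) *
          (((Ef A s)⁻¹ * pJ2 A s - pJ1 A s * ((Ef A s)^2)⁻¹) / (pJ2 A s)^2))) s := by
      have hφ : HasDerivAt (fun x => m2 A 0 T - (Ef A T * pJ2 A T) * (pJ1 A x / pJ2 A x))
          (-((Ef A T * pJ2 A T) *
            (((Ef A s)⁻¹ * pJ2 A s - pJ1 A s * ((Ef A s)^2)⁻¹) / (pJ2 A s)^2))) s :=
        (((pJ1_deriv hA s).div (pJ2_deriv hA s) h1).const_mul (Ef A T * pJ2 A T)).const_sub _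
      refine hφ.congr_of_eventuallyEq ?_
      filter_upwards [isOpen_Ioo.mem_nhds hs] with x hx
      exact key x hx
    have heq : -(sig2 A 0 T / m1 A s T) * ((sig2 A 0 s - m2 A 0 s) / (sig2 A 0 s)^2)
        = -((Ef A T * pJ2 A T) *
          (((Ef A s)⁻¹ * pJ2 A s - pJ1 A s * ((Ef A s)^2)⁻¹) / (pJ2 A s)^2)) := by
      have hes : Ef A s ≠ 0 := hEne s
      simp only [m1_repr hA, m2_repr hA, sig2_repr hA, pJ1_zero, pJ2_zero, sub_zero,
        Ef_zero, div_one]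
      field_simp
    constructor
    · rw [heq]; exact hd
    · -- sign
      have hms : m2 A 0 s ≤ sig2 A 0 s := by
        rw [m2, sig2]
        refine intervalIntegral.integral_mono_on hs.1.le ?_ ?_ ?_
        · have : (fun u => Real.exp (∫ v in u..s, A v)) = fun u => Ef A s / Ef A u := by
            funext u; exact exp_int_eq hA u s
          rw [this]
          exact (continuous_const.div (Ef_cont hA) hEne).intervalIntegrable _ _
        · have : (fun u => Real.exp (2 * ∫ v in u..s, A v)) =
              fun u => (Ef A s / Ef A u)^2 := by
            funext u
            rw [two_mul, Real.exp_add, exp_int_eq hA, sq]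
          rw [this]
          exact ((continuous_const.div (Ef_cont hA) hEne).pow 2).intervalIntegrable _ _
        · intro u hu
          have hint : 0 ≤ ∫ v in u..s, A v := by
            refine intervalIntegral.integral_nonneg hu.2 fun x hx => ?_
            exact hA0 x ⟨le_trans hu.1 hx.1, le_trans hx.2 hs.2.le⟩
          have h1' : (1:ℝ) ≤ Real.exp (∫ v in u..s, A v) := Real.one_le_exp hint
          calc Real.exp (∫ v in u..s, A v)
              ≤ Real.exp (∫ v in u..s, A v) * Real.exp (∫ v in u..s, A v) :=
                le_mul_of_one_le_left (Real.exp_pos _).le h1'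
            _ = Real.exp (2 * ∫ v in u..s, A v) := by rw [two_mul, Real.exp_add]
      have hpos1 : 0 < sig2 A 0 T := by
        rw [sig2_repr hA, pJ2_zero, sub_zero]
        exact mul_pos (pow_pos (Ef_pos A T) 2) hbT
      have hpos2 : 0 < m1 A s T := Real.exp_pos _
      have hpos3 : 0 < sig2 A 0 s := by
        rw [sig2_repr hA, pJ2_zero, sub_zero]
        exact mul_pos (pow_pos (Ef_pos A s) 2) (hbpos s hs)
      have : 0 ≤ (sig2 A 0 T / m1 A s T) * ((sig2 A 0 s - m2 A 0 s) / (sig2 A 0 s)^2) := by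
        apply mul_nonneg (div_nonneg hpos1.le hpos2.le)
        exact div_nonneg (sub_nonneg.2 hms) (sq_nonneg _)
      linarith
  refine ⟨?_, ?_, ?_, ?_⟩
  · -- Part 1
    intro s hs
    rw [key s hs]
    have h1 : pJ2 A s ≠ 0 := (hbpos s hs).ne'
    have hes : Ef A s ≠ 0 := hEne s
    simp only [m1_repr hA, m2_repr hA, sig2_repr hA, pJ1_zero, pJ2_zero, sub_zero,
      Ef_zero, div_one]
    field_simp
  · -- Part 2: limit
    have hval : m2 A 0 T - (Ef A T * pJ2 A T) * (pJ1 A T / pJ2 A T) = 0 := by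
      rw [m2_repr hA, pJ1_zero, sub_zero]
      field_simp
      ring
    have h2 : Filter.Tendsto (fun s => m2 A 0 T - (Ef A T * pJ2 A T) * (pJ1 A s / pJ2 A s))
        (nhdsWithin T (Set.Iio T)) (nhds 0) := by
      have h := (hphi_cont.continuousWithinAt (s := Set.Iio T)).tendsto
      rwa [hval] at h
    refine h2.congr' ?_
    have hmem : Set.Ioo (0:ℝ) T ∈ nhdsWithin T (Set.Iio T) := by
      rw [← Set.Ioi_inter_Iio] ; exact Filter.inter_mem
        (mem_nhdsWithin_of_mem_nhds (Ioi_mem_nhds hT)) self_mem_nhdsWithin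
    filter_upwards [hmem] with s hs
    exact (key s hs).symm
  · -- Part 3
    exact hder
  · -- Part 4: antitone
    refine antitoneOn_of_deriv_nonpos (convex_Ioo 0 T)
      (fun x hx => ((hder x hx).1.differentiableAt.continuousAt.continuousWithinAt))
      (fun x hx => by
        rw [interior_Ioo] at hx
        exact (hder x hx).1.differentiableAt.differentiableWithinAt)
      (fun x hx => by
        rw [interior_Ioo] at hx
        rw [(hder x hx).1.deriv]
        exact (hder x hx).2)
end
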